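/- Let β be a Salem number. Then no rational number in (0,1) has a purely periodic β-expansion; in particular γ(β) = 0. -/

import Mathlib

open Polynomial

noncomputable section

/-- The β-transformation `x ↦ βx - ⌊βx⌋` on `[0,1)`. -/
def betaT (β : ℝ) (x : ℝ) : ℝ := β * x - ⌊β * x⌋

/-- `x` has a purely periodic β-expansion. -/
def PurelyPeriodic (β x : ℝ) : Prop := ∃ p : ℕ, 1 ≤ p ∧ (betaT β)^[p] x = x

/-- `x` has a finite β-expansion. -/
def FiniteExp (β x : ℝ) : Prop := ∃ n : ℕ, (betaT β)^[n] x = 0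

/-- `γ(β)`: the supremum of `c ∈ [0,1)` such that every rational in `[0,c]`
has a purely periodic β-expansion. -/
def gamma (β : ℝ) : ℝ :=
  sSup {c | c ∈ Set.Ico (0 : ℝ) 1 ∧
    ∀ r : ℚ, 0 ≤ (r : ℝ) → (r : ℝ) ≤ c → PurelyPeriodic β (r : ℝ)}

/-- `β` is a Pisot number. -/
def IsPisot (β : ℝ) : Prop :=
  1 < β ∧ IsIntegral ℤ β ∧
    ∀ z : ℂ, aeval z (minpoly ℚ β) = 0 → z ≠ (β : ℂ) → ‖z‖ < 1

/-- `β` is a Pisot unit. -/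
def IsPisotUnit (β : ℝ) : Prop := IsPisot β ∧ IsIntegral ℤ β⁻¹

/-- Property (F): every element of `ℤ[β, β⁻¹] ∩ [0,1)` has a finite β-expansion. -/
def PropertyF (β : ℝ) : Prop :=
  ∀ x : ℝ, x ∈ Subring.closure ({β, β⁻¹} : Set ℝ) → x ∈ Set.Ico (0 : ℝ) 1 → FiniteExp β x

/-- All Galois conjugates of `β` other than `β` itself are non-real. -/
def NonRealConjugates (β : ℝ) : Prop :=
  ∀ z : ℂ, aeval z (minpoly ℚ β) = 0 → z ≠ (β : ℂ) → z.im ≠ 0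

/-- The field `ℚ(β)` as a subfield of `ℝ`. -/
def Qbeta (β : ℝ) : IntermediateField ℚ ℝ := IntermediateField.adjoin ℚ {β}

/-- `β` as an element of `ℚ(β)`. -/
def genβ (β : ℝ) : Qbeta β := ⟨β, IntermediateField.mem_adjoin_simple_self ℚ β⟩

/-- The set of β-integers. -/
def IntBeta (β : ℝ) : Set ℝ :=
  {x | 0 ≤ x ∧ ∃ k : ℕ, β ^ (-(k : ℤ)) * x ∈ Set.Ico (0 : ℝ) 1 ∧
    (betaT β)^[k] (β ^ (-(k : ℤ)) * x) = 0}

/-- The central tile `𝒯 = closure σ(Int(β))`. -/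
def centralTile (β : ℝ) (σ : Qbeta β →+* ℂ) : Set ℂ :=
  closure {z | ∃ x : Qbeta β, (x : ℝ) ∈ IntBeta β ∧ z = σ x}

/-- `z` is a spiral point with respect to `X`: every ray of positive length issued from `z`
meets both the interior and the complement of `X`. -/
def SpiralPoint (X : Set ℂ) (z : ℂ) : Prop :=
  ∀ ε : ℝ, 0 < ε → ∀ θ : ℝ,
    (∃ ρ : ℝ, ρ ∈ Set.Ico (0 : ℝ) ε ∧
      z + (ρ : ℂ) * Complex.exp (θ * Complex.I) ∈ interior X) ∧
    (∃ ρ : ℝ, ρ ∈ Set.Ico (0 : ℝ) ε ∧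
      z + (ρ : ℂ) * Complex.exp (θ * Complex.I) ∉ X)

/-- The successor of `x` in `Int(β)`. -/
def succIn (β : ℝ) (x : ℝ) : ℝ := sInf {y | y ∈ IntBeta β ∧ x < y}

/-- The subtile `𝒯_i` of the central tile. -/
def subtile (β : ℝ) (σ : Qbeta β →+* ℂ) (i : ℕ) : Set ℂ :=
  closure {z | ∃ x : Qbeta β, (x : ℝ) ∈ IntBeta β ∧
    succIn β (x : ℝ) - (x : ℝ) = (betaT β)^[i] 1 ∧ z = σ x}


/-- `β` is a Salem number. -/
def IsSalem (β : ℝ) : Prop :=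
  1 < β ∧ IsIntegral ℤ β ∧
    (∀ z : ℂ, aeval z (minpoly ℚ β) = 0 → z ≠ (β : ℂ) → ‖z‖ ≤ 1) ∧
    (∃ z : ℂ, aeval z (minpoly ℚ β) = 0 ∧ ‖z‖ = 1)


/-! If `r > 0` has a purely periodic expansion with period `p` and digits `dᵢ ≥ 0`, then
`r = ∑ dᵢ β^-(i+1) + r β^-p`, so `β⁻¹` is a root of `f = r (1 - X^p) - ∑ dᵢ X^(i+1) ∈ ℚ[X]`.
A conjugate `z` of `β` with `|z| = 1` satisfies `z⁻¹ = z̄`, so the conjugates of `β` are closed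
under inversion and `f(β) = 0` as well. But `f(β) < 0` because `β > 1`. -/

open Finset

section Reciprocal

lemma Polynomial.aeval_reflect_eq_zero_iff {R A : Type*} [CommSemiring R] [Field A] [Algebra R A]
    {x : A} (hx : x ≠ 0) {N : ℕ} {f : R[X]} (hf : f.natDegree ≤ N) :
    aeval x (reflect N f) = 0 ↔ aeval x⁻¹ f = 0 := by
  have : Invertible x⁻¹ := invertibleOfNonzero (inv_ne_zero hx)
  have := eval₂_reflect_eq_zero_iff (algebraMap R A) x⁻¹ N f hf
  rwa [invOf_eq_inv, inv_inv] at this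

lemma Polynomial.aeval_inv_eq_zero_iff_of_norm_eq_one {z : ℂ} (hz : ‖z‖ = 1) {f : ℚ[X]} :
    aeval z⁻¹ f = 0 ↔ aeval z f = 0 := by
  rw [RCLike.inv_eq_conj hz]
  have : aeval (starRingEnd ℂ z) f = starRingEnd ℂ (aeval z f) :=
    aeval_algHom_apply (Complex.conjAe.restrictScalars ℚ) z f
  rw [this, map_eq_zero]

variable {β : ℝ} {z : ℂ}

lemma aeval_eq_zero_iff_of_aeval_minpoly_eq_zero (hβ : IsIntegral ℚ β)
    (hz : aeval z (minpoly ℚ β) = 0) {f : ℚ[X]} : aeval z f = 0 ↔ aeval β f = 0 := by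
  rw [(minpoly.irreducible hβ).dvd_iff_aeval_eq_zero hz, minpoly.dvd_iff]

lemma aeval_eq_zero_of_aeval_inv_eq_zero (hβ : IsIntegral ℚ β) (hβ0 : β ≠ 0)
    (hz : aeval z (minpoly ℚ β) = 0) (hz1 : ‖z‖ = 1) {f : ℚ[X]} (hf : aeval β⁻¹ f = 0) :
    aeval β f = 0 := by
  have hz0 : z ≠ 0 := by rintro rfl; simp at hz1
  have hdeg := le_refl f.natDegree
  -- roots: `f(β⁻¹) ⇒ f*(β) ⇒ f*(z) ⇒ f(z⁻¹) ⇒ f(z) ⇒ f(β)`, with `f*` the reflection of `f`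
  rw [← aeval_eq_zero_iff_of_aeval_minpoly_eq_zero hβ hz,
    ← aeval_inv_eq_zero_iff_of_norm_eq_one hz1, ← aeval_reflect_eq_zero_iff hz0 hdeg,
    aeval_eq_zero_iff_of_aeval_minpoly_eq_zero hβ hz, aeval_reflect_eq_zero_iff hβ0 hdeg]
  exact hf

end Reciprocal

section BetaExpansion

variable {β x : ℝ}

def betaDigit (β x : ℝ) (i : ℕ) : ℤ := ⌊β * (betaT β)^[i] x⌋

lemma betaT_iterate_succ (β x : ℝ) (i : ℕ) :
    (betaT β)^[i + 1] x = β * (betaT β)^[i] x - betaDigit β x i :=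
  Function.iterate_succ_apply' _ _ _

lemma betaT_iterate_nonneg (hx : 0 ≤ x) : ∀ i, 0 ≤ (betaT β)^[i] x
  | 0 => hx
  | i + 1 => by rw [Function.iterate_succ_apply']; exact Int.fract_nonneg _

lemma betaDigit_nonneg (hβ : 0 ≤ β) (hx : 0 ≤ x) (i : ℕ) : 0 ≤ betaDigit β x i :=
  Int.floor_nonneg.mpr (mul_nonneg hβ (betaT_iterate_nonneg hx i))

lemma eq_sum_betaDigit_add_betaT_iterate (hβ : β ≠ 0) (x : ℝ) (k : ℕ) :
    x = ∑ i ∈ range k, (betaDigit β x i : ℝ) * β⁻¹ ^ (i + 1) + (betaT β)^[k] x * β⁻¹ ^ k := by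
  induction k with
  | zero => simp
  | succ k ih =>
    refine ih.trans ?_
    rw [sum_range_succ, betaT_iterate_succ, pow_succ]
    field_simp
    ring

lemma not_purelyPeriodic_of_aeval_minpoly_eq_zero_of_norm_eq_one (hβ : 1 < β)
    (hint : IsIntegral ℚ β) {z : ℂ} (hz : aeval z (minpoly ℚ β) = 0) (hz1 : ‖z‖ = 1)
    (r : ℚ) (hr : 0 < (r : ℝ)) : ¬ PurelyPeriodic β r := by
  rintro ⟨p, hp, hper⟩
  have hβ0 : β ≠ 0 := by positivity
  set f : ℚ[X] := C r * (1 - X ^ p) - ∑ i ∈ range p, C (betaDigit β r i : ℚ) * X ^ (i + 1)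
  have hf (y : ℝ) :
      aeval y f = r * (1 - y ^ p) - ∑ i ∈ range p, (betaDigit β r i : ℝ) * y ^ (i + 1) := by
    simp [f]
  have hinv : aeval β⁻¹ f = 0 := by
    have := eq_sum_betaDigit_add_betaT_iterate hβ0 r p
    rw [hper] at this
    rw [hf]
    linear_combination this
  have hneg : aeval β f < 0 := by
    have hsum : 0 ≤ ∑ i ∈ range p, (betaDigit β r i : ℝ) * β ^ (i + 1) :=
      sum_nonneg fun i _ => mul_nonneg (by exact_mod_cast betaDigit_nonneg (by positivity) hr.le i)
        (by positivity)
    have hpow : 1 < β ^ p := one_lt_pow₀ hβ (by omega)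
    rw [hf]
    nlinarith
  exact hneg.ne (aeval_eq_zero_of_aeval_inv_eq_zero hint hβ0 hz hz1 hinv)

end BetaExpansion

lemma gamma_eq_zero_of_forall_not_purelyPeriodic {β : ℝ}
    (h : ∀ r : ℚ, 0 < (r : ℝ) → ¬ PurelyPeriodic β r) : gamma β = 0 := by
  suffices {c | c ∈ Set.Ico (0 : ℝ) 1 ∧
      ∀ r : ℚ, 0 ≤ (r : ℝ) → (r : ℝ) ≤ c → PurelyPeriodic β (r : ℝ)} = {0} by
    rw [gamma, this, csSup_singleton]
  ext c
  constructor
  · rintro ⟨⟨hc0, -⟩, hall⟩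
    by_contra hne
    obtain ⟨q, hq0, hqc⟩ := exists_rat_btwn (lt_of_le_of_ne hc0 (Ne.symm hne))
    exact h q hq0 (hall q hq0.le hqc.le)
  · rintro rfl
    refine ⟨⟨le_rfl, zero_lt_one⟩, fun r hr0 hr1 => ?_⟩
    rw [le_antisymm hr1 hr0]
    exact ⟨1, le_rfl, by simp [betaT]⟩

theorem statement16 (β : ℝ) (hS : IsSalem β) :
    (∀ r : ℚ, 0 < (r : ℝ) → (r : ℝ) < 1 → ¬ PurelyPeriodic β (r : ℝ)) ∧
      gamma β = 0 := by
  obtain ⟨hβ, hint, -, z, hz, hz1⟩ := hS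
  have h := not_purelyPeriodic_of_aeval_minpoly_eq_zero_of_norm_eq_one hβ hint.tower_top hz hz1
  exact ⟨fun r hr _ => h r hr, gamma_eq_zero_of_forall_not_purelyPeriodic h⟩

end
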